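/- arXiv:2004.09306 — 2 statements merged into one kernel-verified Lean document; each statement's English description precedes it below -/
import Mathlib

section
/- The DAG-Wishart distributions form a conjugate family for Gaussian DAG models: if (D,L) has prior density π^{Θ_D}_{U, α(D)} and X₁,…,X_n | (D,L) are i.i.d. N_p(0, (Lᵀ)⁻¹ D L⁻¹), then the posterior density of (D,L) is π^{Θ_D}_{Ũ, α̃(D)} with Ũ = U + nS and α̃_i(D) = n + α_i(D), where S = (1/n) Σᵢ Xᵢ Xᵢᵀ. -/
open Matrix Real MeasureTheory Finset

noncomputable def cholFactor {p : ℕ} (pa : Fin p → Finset (Fin p))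
    (l : ∀ i : Fin p, {j // j ∈ pa i} → ℝ) : Matrix (Fin p) (Fin p) ℝ :=
  fun j i => if j = i then 1 else if h : j ∈ pa i then l i ⟨j, h⟩ else 0

noncomputable def subGT {p : ℕ} (pa : Fin p → Finset (Fin p))
    (U : Matrix (Fin p) (Fin p) ℝ) (i : Fin p) :
    Matrix {j // j ∈ pa i} {j // j ∈ pa i} ℝ :=
  Matrix.of fun a b => U a.1 b.1

noncomputable def subGE {p : ℕ} (pa : Fin p → Finset (Fin p))
    (U : Matrix (Fin p) (Fin p) ℝ) (i : Fin p) :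
    Matrix (Unit ⊕ {j // j ∈ pa i}) (Unit ⊕ {j // j ∈ pa i}) ℝ :=
  Matrix.fromBlocks (Matrix.of fun _ _ => U i i) (Matrix.of fun _ b => U i b.1)
    (Matrix.of fun a _ => U a.1 i) (subGT pa U i)

/-- The normalizing constant `z_D(U, α(D))` of the DAG-Wishart distribution. -/
noncomputable def zDAG {p : ℕ} (pa : Fin p → Finset (Fin p))
    (U : Matrix (Fin p) (Fin p) ℝ) (α : Fin p → ℝ) : ℝ :=
  ∏ i : Fin p,
    Real.Gamma (α i / 2 - ((pa i).card : ℝ) / 2 - 1)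
      * (2 : ℝ) ^ (α i / 2 - 1)
      * Real.sqrt π ^ ((pa i).card)
      * (subGT pa U i).det ^ (α i / 2 - ((pa i).card : ℝ) / 2 - 3 / 2)
      / (subGE pa U i).det ^ (α i / 2 - ((pa i).card : ℝ) / 2 - 1)

/-- The normalized DAG-Wishart density `π^{Θ_D}_{U,α}` at `(D,L) = (diagonal d, cholFactor pa l)`. -/
noncomputable def dagWishartDensity {p : ℕ} (pa : Fin p → Finset (Fin p))
    (U : Matrix (Fin p) (Fin p) ℝ) (α : Fin p → ℝ)
    (d : Fin p → ℝ) (l : ∀ i : Fin p, {j // j ∈ pa i} → ℝ) : ℝ :=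
  (zDAG pa U α)⁻¹
    * Real.exp (-(1 / 2) * Matrix.trace
        ((cholFactor pa l * (Matrix.diagonal d)⁻¹ * (cholFactor pa l).transpose) * U))
    * ∏ i : Fin p, (d i) ^ (-(α i) / 2)

/-- The Gaussian density of `N_p(0, Ω⁻¹)` (precision matrix `Ω`) at `x`. -/
noncomputable def gaussDensity {p : ℕ} (Ω : Matrix (Fin p) (Fin p) ℝ) (x : Fin p → ℝ) : ℝ :=
  (2 * π) ^ (-(p : ℝ) / 2) * Ω.det ^ ((1 : ℝ) / 2)
    * Real.exp (-(1 / 2) * (x ⬝ᵥ (Ω *ᵥ x)))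

/-!
With `Ω = L D⁻¹ Lᵀ`, the Gaussian likelihood of the sample is
`(2π)^{-np/2} (det Ω)^{n/2} exp(-½ tr(Ω T))` where `T = Σₖ Xₖ Xₖᵀ`. Since `L` is unit lower
triangular, `det Ω = ∏ᵢ dᵢ⁻¹`, so the likelihood has exactly the shape of a DAG-Wishart kernel:
multiplying the prior kernel by it replaces `U` by `U + T` and `αᵢ` by `n + αᵢ`. The normalizing
constants on both sides are positive, so their ratio is absorbed into the constant.
-/

lemma natCast_smul_inv_smul_sum_fin {M : Type*} [AddCommGroup M] [Module ℝ M] {n : ℕ}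
    (f : Fin n → M) : (n : ℝ) • ((n : ℝ)⁻¹ • ∑ k, f k) = ∑ k, f k := by
  rcases n.eq_zero_or_pos with rfl | hn
  · simp
  · rw [smul_inv_smul₀ (Nat.cast_ne_zero.2 hn.ne')]

lemma trace_mul_vecMulVec_self {ι : Type*} [Fintype ι] (Ω : Matrix ι ι ℝ) (x : ι → ℝ) :
    trace (Ω * vecMulVec x x) = x ⬝ᵥ (Ω *ᵥ x) := by
  rw [mul_vecMulVec, trace_vecMulVec, dotProduct_comm]

lemma prod_gaussDensity {p n : ℕ} {Ω : Matrix (Fin p) (Fin p) ℝ} (hΩ : 0 ≤ Ω.det)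
    (X : Fin n → Fin p → ℝ) :
    ∏ k, gaussDensity Ω (X k)
      = ((2 * π) ^ (-(p : ℝ) / 2)) ^ n
          * (Ω.det ^ ((n : ℝ) / 2)
            * exp (-(1 / 2) * trace (Ω * ∑ k, vecMulVec (X k) (X k)))) := by
  have hdet : (Ω.det ^ ((1 : ℝ) / 2)) ^ n = Ω.det ^ ((n : ℝ) / 2) := by
    rw [← rpow_mul_natCast hΩ]
    ring_nf
  have hquad : ∑ k, -(1 / 2) * (X k ⬝ᵥ (Ω *ᵥ X k))
      = -(1 / 2) * trace (Ω * ∑ k, vecMulVec (X k) (X k)) := by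
    simp only [trace_sum, trace_mul_vecMulVec_self, Finset.mul_sum]
  simp only [gaussDensity, prod_mul_distrib, prod_const, card_univ, Fintype.card_fin, hdet]
  rw [← exp_sum, hquad, mul_assoc]

noncomputable def dagPrecision {p : ℕ} (pa : Fin p → Finset (Fin p)) (d : Fin p → ℝ)
    (l : ∀ i : Fin p, {j // j ∈ pa i} → ℝ) : Matrix (Fin p) (Fin p) ℝ :=
  cholFactor pa l * (diagonal d)⁻¹ * (cholFactor pa l)ᵀ

noncomputable def dagWishartKernel {p : ℕ} (pa : Fin p → Finset (Fin p))
    (U : Matrix (Fin p) (Fin p) ℝ) (α : Fin p → ℝ)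
    (d : Fin p → ℝ) (l : ∀ i : Fin p, {j // j ∈ pa i} → ℝ) : ℝ :=
  exp (-(1 / 2) * trace (dagPrecision pa d l * U)) * ∏ i, d i ^ (-(α i) / 2)

section DAG

variable {p : ℕ} {pa : Fin p → Finset (Fin p)}

lemma dagWishartDensity_eq_inv_mul_kernel (U : Matrix (Fin p) (Fin p) ℝ) (α : Fin p → ℝ)
    (d : Fin p → ℝ) (l : ∀ i : Fin p, {j // j ∈ pa i} → ℝ) :
    dagWishartDensity pa U α d l = (zDAG pa U α)⁻¹ * dagWishartKernel pa U α d l :=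
  mul_assoc _ _ _

lemma cholFactor_isLowerTriangular (hpa : ∀ i : Fin p, ∀ j ∈ pa i, i < j)
    (l : ∀ i : Fin p, {j // j ∈ pa i} → ℝ) : (cholFactor pa l).IsLowerTriangular := by
  intro j i hji
  have hne : j ≠ i := (ne_of_lt hji).symm
  have hnot : j ∉ pa i := fun h => lt_asymm hji (hpa i j h)
  simp [cholFactor, hne, hnot]

lemma det_cholFactor (hpa : ∀ i : Fin p, ∀ j ∈ pa i, i < j)
    (l : ∀ i : Fin p, {j // j ∈ pa i} → ℝ) : (cholFactor pa l).det = 1 := by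
  rw [det_of_isLowerTriangular _ (cholFactor_isLowerTriangular hpa l)]
  simp [cholFactor]

lemma det_dagPrecision (hpa : ∀ i : Fin p, ∀ j ∈ pa i, i < j) (d : Fin p → ℝ)
    (l : ∀ i : Fin p, {j // j ∈ pa i} → ℝ) : (dagPrecision pa d l).det = (∏ i, d i)⁻¹ := by
  rw [dagPrecision, det_mul, det_mul, det_transpose, det_cholFactor hpa, det_nonsing_inv,
    det_diagonal, Ring.inverse_eq_inv, one_mul, mul_one]

lemma subGT_posDef {U : Matrix (Fin p) (Fin p) ℝ} (hU : U.PosDef) (i : Fin p) :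
    (subGT pa U i).PosDef :=
  hU.submatrix Subtype.val_injective

lemma subGE_posDef (hpa : ∀ i : Fin p, ∀ j ∈ pa i, i < j)
    {U : Matrix (Fin p) (Fin p) ℝ} (hU : U.PosDef) (i : Fin p) :
    (subGE pa U i).PosDef := by
  let e : Unit ⊕ {j // j ∈ pa i} → Fin p := Sum.elim (fun _ => i) Subtype.val
  have he : Function.Injective e := by
    rintro (_ | a) (_ | b) h
    · rfl
    · exact ((hpa i b b.2).ne h).elim
    · exact ((hpa i a a.2).ne' h).elim
    · exact congrArg Sum.inr (Subtype.ext h)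
  have hsub : subGE pa U i = U.submatrix e e := by
    ext (_ | a) (_ | b) <;> rfl
  exact hsub ▸ hU.submatrix he

lemma zDAG_pos (hpa : ∀ i : Fin p, ∀ j ∈ pa i, i < j)
    {U : Matrix (Fin p) (Fin p) ℝ} (hU : U.PosDef)
    {α : Fin p → ℝ} (hα : ∀ i, 2 < α i - ((pa i).card : ℝ)) :
    0 < zDAG pa U α := by
  refine prod_pos fun i _ => div_pos ?_ ?_
  · have hΓ : 0 < Gamma (α i / 2 - ((pa i).card : ℝ) / 2 - 1) :=
      Gamma_pos_of_pos (by linarith [hα i])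
    have hdet := (subGT_posDef (pa := pa) hU i).det_pos
    positivity
  · exact rpow_pos_of_pos (subGE_posDef hpa hU i).det_pos _

lemma dagWishartKernel_add (U T : Matrix (Fin p) (Fin p) ℝ) (α : Fin p → ℝ) (m : ℝ)
    {d : Fin p → ℝ} (hd : ∀ i, 0 < d i) (l : ∀ i : Fin p, {j // j ∈ pa i} → ℝ) :
    dagWishartKernel pa (U + T) (fun i => m + α i) d l
      = dagWishartKernel pa U α d l
          * (exp (-(1 / 2) * trace (dagPrecision pa d l * T)) * ∏ i, d i ^ (-m / 2)) := by
  have hsplit : ∀ i, d i ^ (-(m + α i) / 2) = d i ^ (-(α i) / 2) * d i ^ (-m / 2) := fun i => by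
    rw [← rpow_add (hd i)]
    ring_nf
  rw [dagWishartKernel, dagWishartKernel, mul_add, trace_add, mul_add, exp_add,
    prod_congr rfl fun i _ => hsplit i, prod_mul_distrib]
  ring

lemma prod_gaussDensity_dagPrecision {n : ℕ} (hpa : ∀ i : Fin p, ∀ j ∈ pa i, i < j)
    {d : Fin p → ℝ} (hd : ∀ i, 0 < d i) (l : ∀ i : Fin p, {j // j ∈ pa i} → ℝ)
    (X : Fin n → Fin p → ℝ) :
    ∏ k, gaussDensity (dagPrecision pa d l) (X k)
      = ((2 * π) ^ (-(p : ℝ) / 2)) ^ n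
          * (exp (-(1 / 2) * trace (dagPrecision pa d l * ∑ k, vecMulVec (X k) (X k)))
            * ∏ i, d i ^ (-(n : ℝ) / 2)) := by
  have hprod : 0 < ∏ i, d i := prod_pos fun i _ => hd i
  have hdet : (dagPrecision pa d l).det ^ ((n : ℝ) / 2) = ∏ i, d i ^ (-(n : ℝ) / 2) := by
    rw [det_dagPrecision hpa, inv_rpow hprod.le, ← rpow_neg hprod.le,
      ← finsetProd_rpow _ _ fun i _ => (hd i).le, neg_div]
  rw [prod_gaussDensity (by rw [det_dagPrecision hpa]; positivity), hdet, mul_comm (∏ i, _)]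

end DAG

theorem dagWishart_conjugacy_general {p n : ℕ}
    (pa : Fin p → Finset (Fin p)) (hpa : ∀ i : Fin p, ∀ j ∈ pa i, i < j)
    (U : Matrix (Fin p) (Fin p) ℝ) (hU : U.PosDef)
    (α : Fin p → ℝ) (hα : ∀ i, 2 < α i - ((pa i).card : ℝ))
    (X : Fin n → (Fin p → ℝ)) :
    ∃ C : ℝ, 0 < C ∧
      ∀ (d : Fin p → ℝ) (l : ∀ i : Fin p, {j // j ∈ pa i} → ℝ), (∀ i, 0 < d i) →
        dagWishartDensity pa U α d l
            * ∏ k : Fin n,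
                gaussDensity
                  (cholFactor pa l * (Matrix.diagonal d)⁻¹ * (cholFactor pa l).transpose)
                  (X k)
          = C * dagWishartDensity pa
              (U + (n : ℝ) • ((n : ℝ)⁻¹ • ∑ k : Fin n, Matrix.of fun i j => X k i * X k j))
              (fun i => (n : ℝ) + α i) d l := by
  set T : Matrix (Fin p) (Fin p) ℝ := ∑ k, vecMulVec (X k) (X k) with hTdef
  have hT : T.PosSemidef := posSemidef_sum _ fun k _ => posSemidef_vecMulVec_self_star (X k)
  have hz := zDAG_pos hpa hU hα
  have hz' : 0 < zDAG pa (U + T) (fun i => (n : ℝ) + α i) :=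
    zDAG_pos hpa (hU.add_posSemidef hT) fun i => by linarith [hα i, n.cast_nonneg (α := ℝ)]
  refine ⟨((2 * π) ^ (-(p : ℝ) / 2)) ^ n * zDAG pa (U + T) (fun i => (n : ℝ) + α i)
      / zDAG pa U α, by positivity, fun d l hd => ?_⟩
  rw [natCast_smul_inv_smul_sum_fin]
  change dagWishartDensity pa U α d l * ∏ k, gaussDensity (dagPrecision pa d l) (X k)
    = _ * dagWishartDensity pa (U + T) _ d l
  rw [prod_gaussDensity_dagPrecision hpa hd, dagWishartDensity_eq_inv_mul_kernel,
    dagWishartDensity_eq_inv_mul_kernel, dagWishartKernel_add _ _ _ _ hd, ← hTdef]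
  field_simp

/-- Conjugacy of the DAG-Wishart family for Gaussian DAG models: if `(D,L)` has prior density
`π^{Θ_D}_{U,α}` and `X₁,…,X_n | (D,L)` are i.i.d. `N_p(0, (Lᵀ)⁻¹ D L⁻¹)`, then the posterior
density of `(D,L)` is `π^{Θ_D}_{Ũ,α̃}` with `Ũ = U + nS`, `α̃ᵢ = n + αᵢ`, `S = n⁻¹ Σᵢ XᵢXᵢᵀ`;
i.e. prior times likelihood is proportional (in `(D,L)`, with a constant depending only on the
data) to the updated DAG-Wishart density. -/
theorem dagWishart_conjugacy {p n : ℕ}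
    (pa : Fin p → Finset (Fin p)) (hpa : ∀ i : Fin p, ∀ j ∈ pa i, i < j)
    (U : Matrix (Fin p) (Fin p) ℝ) (hU : U.PosDef)
    (α : Fin p → ℝ) (hα : ∀ i, 2 < α i - ((pa i).card : ℝ))
    (X : Fin n → (Fin p → ℝ)) (hn : 0 < n) :
    ∃ C : ℝ, 0 < C ∧
      ∀ (d : Fin p → ℝ) (l : ∀ i : Fin p, {j // j ∈ pa i} → ℝ), (∀ i, 0 < d i) →
        dagWishartDensity pa U α d l
            * ∏ k : Fin n,
                gaussDensity
                  (cholFactor pa l * (Matrix.diagonal d)⁻¹ * (cholFactor pa l).transpose)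
                  (X k)
          = C * dagWishartDensity pa
              (U + (n : ℝ) • ((n : ℝ)⁻¹ • ∑ k : Fin n, Matrix.of fun i j => X k i * X k j))
              (fun i => (n : ℝ) + α i) d l :=
  dagWishart_conjugacy_general pa hpa U hU α hα X
end

section
/- The DAG-Wishart density factorizes across columns: π^{Θ_D}_{U,α(D)}(D,L) = ∏_{i=1}^p f_i(D_ii, L^>_{D.i}), where for each i, conditionally on D_ii, the vector L^>_{D.i} = (L_ji)_{j∈pa_i(D)} is multivariate normal with covariance D_ii (U_D^{>i})⁻¹ and mean −(U_D^{>i})⁻¹ U^>_{D.i}, and D_ii follows an inverse-gamma-type distribution. -/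
/-!
By cyclicity of the trace, `tr(L D⁻¹ Lᵀ U) = Σₖ dₖ⁻¹ cₖᵀ U cₖ`, where `cₖ` is the `k`-th column
of `L`. That column is the unit vector `eₖ` plus the free entries `lₖ` on the parent set
`pa k`, which does not contain `k`; expanding `cₖᵀ U cₖ` for symmetric `U` gives the three
terms `Uₖₖ + 2 lₖᵀ U^>ₖ + lₖᵀ U^{>k} lₖ`. The exponential turns the sum over columns into a
product, and the Gaussian form of each factor is completing the square with the principal
submatrix `U^{>k}`, which is positive definite and hence invertible.
-/

open Matrix Real Finset

/-- The vector `U^>_{D.i} = (U_ji)_{j ∈ pa_i(D)}`. -/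
noncomputable def subVec {p : ℕ} (pa : Fin p → Finset (Fin p))
    (U : Matrix (Fin p) (Fin p) ℝ) (i : Fin p) : {j // j ∈ pa i} → ℝ :=
  fun a => U a.1 i

namespace Matrix

variable {n R : Type*} [Fintype n] [CommRing R]

theorem trace_mul_diagonal_mul_transpose_mul [DecidableEq n] (L U : Matrix n n R) (e : n → R) :
    trace (L * diagonal e * Lᵀ * U) = ∑ k, e k * (Lᵀ k ⬝ᵥ (U *ᵥ Lᵀ k)) := by
  rw [Matrix.mul_assoc (L * diagonal e), trace_mul_comm, ← Matrix.mul_assoc]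
  simp only [trace, diag, mul_diagonal, Matrix.mul_assoc Lᵀ]
  refine sum_congr rfl fun k _ => ?_
  simp only [mul_apply, dotProduct, mulVec, transpose_apply, mul_sum, sum_mul]
  exact sum_congr rfl fun _ _ => sum_congr rfl fun _ _ => by ring

theorem inv_diagonal_of_ne_zero [DecidableEq n] {K : Type*} [Field K] {d : n → K}
    (hd : ∀ i, d i ≠ 0) : (diagonal d)⁻¹ = diagonal fun i => (d i)⁻¹ :=
  inv_eq_right_inv (by simp [diagonal_mul_diagonal, mul_inv_cancel₀ (hd _)])

theorem dotProduct_mulVec_complete_square [DecidableEq n] {A : Matrix n n R} (hA : A.IsSymm)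
    (hdet : IsUnit A.det) (c : R) (v x : n → R) :
    c + 2 * (x ⬝ᵥ v) + x ⬝ᵥ (A *ᵥ x)
      = (x + A⁻¹ *ᵥ v) ⬝ᵥ (A *ᵥ (x + A⁻¹ *ᵥ v)) + (c - v ⬝ᵥ (A⁻¹ *ᵥ v)) := by
  have hAm : A *ᵥ (A⁻¹ *ᵥ v) = v := by rw [mulVec_mulVec, mul_nonsing_inv A hdet, one_mulVec]
  have hcross : (A⁻¹ *ᵥ v) ⬝ᵥ (A *ᵥ x) = x ⬝ᵥ v := by
    rw [dotProduct_mulVec, ← mulVec_transpose, hA.eq, hAm, dotProduct_comm]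
  rw [mulVec_add, hAm, dotProduct_add, add_dotProduct, add_dotProduct, hcross,
    dotProduct_comm (A⁻¹ *ᵥ v) v]
  ring

end Matrix

section cholFactor

variable {p : ℕ} {pa : Fin p → Finset (Fin p)} (l : ∀ i : Fin p, {j // j ∈ pa i} → ℝ)

theorem transpose_cholFactor_dotProduct {k : Fin p} (hk : k ∉ pa k) (g : Fin p → ℝ) :
    (cholFactor pa l)ᵀ k ⬝ᵥ g = g k + l k ⬝ᵥ fun a => g a := by
  have hsplit : ∀ j, cholFactor pa l j k * g j
      = (if j = k then g j else 0) + if h : j ∈ pa k then l k ⟨j, h⟩ * g j else 0 := by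
    intro j
    by_cases hjk : j = k
    · subst hjk; simp [cholFactor, hk]
    · simp [cholFactor, hjk]
  simp only [dotProduct, transpose_apply, hsplit, sum_add_distrib, sum_ite_eq', mem_univ, if_true]
  rw [← sum_attach_eq_sum_dite (pa k) fun a => l k a * g a]
  rfl

theorem transpose_cholFactor_dotProduct_mulVec {U : Matrix (Fin p) (Fin p) ℝ} (hU : U.IsSymm)
    {k : Fin p} (hk : k ∉ pa k) :
    (cholFactor pa l)ᵀ k ⬝ᵥ (U *ᵥ (cholFactor pa l)ᵀ k)
      = U k k + 2 * (l k ⬝ᵥ subVec pa U k) + l k ⬝ᵥ (subGT pa U k *ᵥ l k) := by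
  have hUcol : U *ᵥ (cholFactor pa l)ᵀ k = fun j => U j k + l k ⬝ᵥ fun a => U j a := by
    funext j
    rw [mulVec, dotProduct_comm, transpose_cholFactor_dotProduct l hk]
  rw [hUcol, transpose_cholFactor_dotProduct l hk]
  simp only [dotProduct, subVec, subGT, mulVec, of_apply, mul_add, sum_add_distrib, hU.apply k,
    mul_comm (U _ _)]
  ring

end cholFactor

/-- Column-wise factorization of the DAG-Wishart density.  With `L = cholFactor pa l` and
`D = diagonal d`:
(i) the quadratic expansion
`tr(L D⁻¹ Lᵀ U) = Σᵢ dᵢ⁻¹ [Uᵢᵢ + 2 (L^>ᵢ)ᵀ U^>ᵢ + (L^>ᵢ)ᵀ U^{>i} L^>ᵢ]`;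
(ii) consequently the density factorizes across columns as
`exp(−½ tr(L D⁻¹ Lᵀ U)) ∏ᵢ dᵢ^{−αᵢ/2} = ∏ᵢ fᵢ(dᵢ, lᵢ)`; and
(iii) completing the square: the `i`-th factor's exponent is, up to the inverse-gamma part in
`dᵢ`, the kernel of a multivariate normal for `lᵢ` with mean `−(U^{>i})⁻¹ U^>ᵢ` and
covariance `dᵢ (U^{>i})⁻¹`. -/
theorem dagWishart_columnwise_factorization {p : ℕ}
    (pa : Fin p → Finset (Fin p)) (hpa : ∀ i : Fin p, ∀ j ∈ pa i, i < j)
    (U : Matrix (Fin p) (Fin p) ℝ) (hU : U.PosDef)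
    (α : Fin p → ℝ)
    (d : Fin p → ℝ) (hd : ∀ i, 0 < d i)
    (l : ∀ i : Fin p, {j // j ∈ pa i} → ℝ) :
    Matrix.trace ((cholFactor pa l * (Matrix.diagonal d)⁻¹ * (cholFactor pa l).transpose) * U)
      = ∑ i : Fin p, (d i)⁻¹
          * (U i i + 2 * (l i ⬝ᵥ subVec pa U i) + l i ⬝ᵥ (subGT pa U i *ᵥ l i)) ∧
    Real.exp (-(1 / 2) * Matrix.trace
        ((cholFactor pa l * (Matrix.diagonal d)⁻¹ * (cholFactor pa l).transpose) * U))
      * ∏ i : Fin p, (d i) ^ (-(α i) / 2)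
      = ∏ i : Fin p,
          (d i) ^ (-(α i) / 2)
            * Real.exp (-(1 / (2 * d i))
                * (U i i + 2 * (l i ⬝ᵥ subVec pa U i) + l i ⬝ᵥ (subGT pa U i *ᵥ l i))) ∧
    ∀ i : Fin p,
      U i i + 2 * (l i ⬝ᵥ subVec pa U i) + l i ⬝ᵥ (subGT pa U i *ᵥ l i)
        = (l i + (subGT pa U i)⁻¹ *ᵥ subVec pa U i)
              ⬝ᵥ (subGT pa U i *ᵥ (l i + (subGT pa U i)⁻¹ *ᵥ subVec pa U i))
          + (U i i - subVec pa U i ⬝ᵥ ((subGT pa U i)⁻¹ *ᵥ subVec pa U i)) := by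
  have hUsymm : U.IsSymm := isHermitian_iff_isSymm.mp hU.isHermitian
  have hnotmem : ∀ k, k ∉ pa k := fun k hk => lt_irrefl k (hpa k k hk)
  have htrace : Matrix.trace
      ((cholFactor pa l * (Matrix.diagonal d)⁻¹ * (cholFactor pa l).transpose) * U)
        = ∑ i : Fin p, (d i)⁻¹
          * (U i i + 2 * (l i ⬝ᵥ subVec pa U i) + l i ⬝ᵥ (subGT pa U i *ᵥ l i)) := by
    rw [inv_diagonal_of_ne_zero fun i => (hd i).ne', trace_mul_diagonal_mul_transpose_mul]
    exact sum_congr rfl fun k _ => by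
      rw [transpose_cholFactor_dotProduct_mulVec l hUsymm (hnotmem k)]
  refine ⟨htrace, ?_, fun i => ?_⟩
  · rw [htrace, mul_sum, exp_sum, ← prod_mul_distrib]
    refine prod_congr rfl fun i _ => ?_
    rw [mul_comm]
    congr 2
    ring
  · have hdet : IsUnit (subGT pa U i).det :=
      (hU.submatrix Subtype.val_injective).det_pos.ne'.isUnit
    exact dotProduct_mulVec_complete_square (hUsymm.submatrix _) hdet _ _ _
end
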